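/- arXiv:1210.1015 — 2 statements merged into one kernel-verified Lean document; each statement's English description precedes it below -/
import Mathlib

section
/- Let d ≥ 1, let α and β be finite sets with |β| < d, |α| > max(|β|, 4), and set k := |α| + |β| − d, assuming d ≤ k and k ≥ 2. Let L ≤ S_β and let G be a subgroup of S_α × S_β whose second projection equals L and whose first projection equals either A_α or S_α. Let Ĝ be the image of G in S_{α⊕β} under the embedding sending (g, h) to g ⊕ h. Then the Galois closure of Ĝ over k equals {g ⊕ h : g ∈ S_α, h ∈ L}, i.e., the direct product S_α × L. -/
/-- `σ ⊢ f`: the permutation `σ` leaves the function `f : ({1,…,k}^Ω) → {1,…,k}` invariant. -/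
def InvariantUnder {Ω : Type*} (k : ℕ) (σ : Equiv.Perm Ω) (f : (Ω → Fin k) → Fin k) : Prop :=
  ∀ x : Ω → Fin k, f x = f (fun i => x (σ i))

/-- The Galois closure over `k` of a subgroup `G` of the symmetric group on `Ω`. -/
def galoisClosure {Ω : Type*} (k : ℕ) (G : Subgroup (Equiv.Perm Ω)) : Set (Equiv.Perm Ω) :=
  {σ | ∀ f : (Ω → Fin k) → Fin k, (∀ π ∈ G, InvariantUnder k π f) → InvariantUnder k σ f}

/-- `G` is Galois closed over `k`. -/
def IsGaloisClosed {Ω : Type*} (k : ℕ) (G : Subgroup (Equiv.Perm Ω)) : Prop :=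
  galoisClosure k G = (G : Set (Equiv.Perm Ω))

/-!
A permutation `σ` lies in the Galois closure of `G` over `k` iff every `k`-colouring `x` of `Ω`
satisfies `x ∘ σ = x ∘ τ` for some `τ ∈ G`: the indicator of the `G`-orbit of `x` is
`G`-invariant. Colouring `α` with one colour and `β` injectively with the remaining ones
(possible as `|β| < k`) forces the closure into `S_α × L`. Conversely, the `g` with
`(g, 1) ∈ G` form a normal subgroup of the simple group `A_α`, which is not trivial since
`A_α` does not embed into `S_β`; so `A_α × 1 ≤ G`. As `k < |α|`, every colouring repeats a
colour on `α`, and the transposition of two such points corrects the sign of `g` in `(g, h)`.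
-/

open Equiv Equiv.Perm

theorem mem_galoisClosure_iff {Ω : Type*} {k : ℕ} {G : Subgroup (Perm Ω)} {σ : Perm Ω} :
    σ ∈ galoisClosure k G ↔ ∀ x : Ω → Fin k, ∃ τ ∈ G, x ∘ σ = x ∘ τ := by
  classical
  constructor
  · intro hσ x
    rcases subsingleton_or_nontrivial (Fin k) with _ | _
    · exact ⟨1, one_mem G, Subsingleton.elim _ _⟩
    obtain ⟨a, b, hab⟩ := exists_pair_ne (Fin k)
    let f : (Ω → Fin k) → Fin k := fun y => if ∃ π ∈ G, y ∘ π = x then a else b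
    have hf : ∀ π ∈ G, InvariantUnder k π f := by
      intro π hπ y
      have horbit : (∃ ρ ∈ G, y ∘ ρ = x) ↔ ∃ ρ ∈ G, (y ∘ π) ∘ ρ = x :=
        ⟨fun ⟨ρ, hρ, h⟩ => ⟨π⁻¹ * ρ, mul_mem (inv_mem hπ) hρ, by rw [← h]; ext; simp⟩,
          fun ⟨ρ, hρ, h⟩ => ⟨π * ρ, mul_mem hπ hρ, by rw [← h]; rfl⟩⟩
      exact if_congr horbit rfl rfl
    have hx : f (x ∘ σ) = a := (hσ f hf x).symm.trans (if_pos ⟨1, one_mem G, rfl⟩)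
    obtain ⟨π, hπ, h⟩ : ∃ π ∈ G, (x ∘ σ) ∘ π = x := by
      by_contra hne
      exact hab (hx.symm.trans (if_neg hne))
    exact ⟨π⁻¹, inv_mem hπ, funext fun i => by simpa using congrFun h (π⁻¹ i)⟩
  · intro h f hf x
    obtain ⟨τ, hτ, he⟩ := h x
    exact (hf τ hτ x).trans (congrArg f he.symm)

theorem Subgroup.prod_bot_le_of_isSimpleGroup {P Q : Type*} [Group P] [Group Q] [Finite Q]
    {G : Subgroup (P × Q)} {S : Subgroup P} [IsSimpleGroup S]
    (hS : S ≤ G.map (MonoidHom.fst P Q)) (hcard : Nat.card Q < Nat.card S) :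
    S.prod ⊥ ≤ G := by
  have lift : ∀ s : S, ∃ q : Q, ((s : P), q) ∈ G := fun s => by
    obtain ⟨⟨p, q⟩, hpq, hp⟩ := hS s.2
    exact ⟨q, by simpa [← hp] using hpq⟩
  let N : Subgroup S := (G.comap (MonoidHom.inl P Q)).subgroupOf S
  have hN : ∀ s : S, s ∈ N ↔ ((s : P), (1 : Q)) ∈ G := fun _ => Iff.rfl
  have hNormal : N.Normal := ⟨fun n hn s => by
    obtain ⟨q, hq⟩ := lift s
    exact (hN _).2 (by simpa using mul_mem (mul_mem hq ((hN n).1 hn)) (inv_mem hq))⟩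
  rcases IsSimpleGroup.eq_bot_or_eq_top_of_normal N hNormal with hbot | htop
  · choose f hf using lift
    have hinj : Function.Injective f := fun s t hst => by
      have hmem : s * t⁻¹ ∈ N := (hN _).2 (by simpa [hst] using mul_mem (hf s) (inv_mem (hf t)))
      rw [hbot, Subgroup.mem_bot] at hmem
      exact mul_inv_eq_one.1 hmem
    exact absurd (Nat.card_le_card_of_injective f hinj) hcard.not_ge
  · rintro ⟨p, q⟩ hpq
    rw [Subgroup.mem_prod, Subgroup.mem_bot] at hpq
    obtain ⟨hp, rfl⟩ := hpq
    exact (hN ⟨p, hp⟩).1 (htop ▸ Subgroup.mem_top _)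

theorem nat_card_perm_lt_nat_card_alternatingGroup {α β : Type*} [Fintype α] [DecidableEq α]
    [Fintype β] (h3 : 3 ≤ Fintype.card α) (hβα : Fintype.card β < Fintype.card α) :
    Nat.card (Perm β) < Nat.card (alternatingGroup α) := by
  have : Nontrivial α := Fintype.one_lt_card_iff_nontrivial.1 (by omega)
  obtain ⟨n, hn⟩ : ∃ n, Fintype.card α = n + 1 := ⟨_, (Nat.sub_add_cancel (by omega)).symm⟩
  have h2 := two_mul_card_alternatingGroup (α := α)
  rw [Fintype.card_perm, hn, Nat.factorial_succ] at h2
  rw [Nat.card_perm, Nat.card_eq_fintype_card, Nat.card_eq_fintype_card]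
  have hle : (Fintype.card β).factorial ≤ n.factorial := Nat.factorial_le (by omega)
  nlinarith [Nat.factorial_pos n]

theorem galoisClosure_map_sumCongrHom_subset {α β : Type*} [Finite α] [Fintype β] {k : ℕ}
    (hβk : Fintype.card β < k) (G : Subgroup (Perm α × Perm β)) :
    galoisClosure k (G.map (sumCongrHom α β)) ⊆
      {σ | ∃ g : Perm α, ∃ h ∈ G.map (MonoidHom.snd _ _), σ = Equiv.sumCongr g h} := by
  obtain ⟨m, rfl⟩ : ∃ m, k = m + 1 := ⟨k - 1, by omega⟩
  intro σ hσ
  let e : β → Fin m := fun b => Fin.castLE (by omega) (Fintype.equivFin β b)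
  have he : Function.Injective e := fun b b' h =>
    (Fintype.equivFin β).injective (Fin.castLE_injective _ h)
  let x : α ⊕ β → Fin (m + 1) := Sum.elim (fun _ => Fin.last m) (fun b => (e b).castSucc)
  obtain ⟨_, ⟨⟨g', h'⟩, hgh', rfl⟩, hx⟩ := mem_galoisClosure_iff.1 hσ x
  have hinl : Set.MapsTo σ (Set.range Sum.inl) (Set.range Sum.inl) := by
    rintro _ ⟨a, rfl⟩
    have := congrFun hx (Sum.inl a)
    cases hσa : σ (Sum.inl a) with
    | inl a' => exact ⟨a', rfl⟩
    | inr b => simp [x, hσa, Fin.castSucc_ne_last] at this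
  obtain ⟨⟨g, h⟩, rfl⟩ := mem_sumCongrHom_range_of_perm_mapsTo_inl hinl
  have hh : h = h' := Equiv.ext fun b => by
    simpa [x, Fin.castSucc_inj, he.eq_iff] using congrFun hx (Sum.inr b)
  exact ⟨g, h, hh ▸ ⟨(g', h'), hgh', rfl⟩, rfl⟩

theorem mem_alternatingGroup_or_swap_mul_mem {α : Type*} [Fintype α] [DecidableEq α]
    {i j : α} (hij : i ≠ j) (p : Perm α) :
    p ∈ alternatingGroup α ∨ swap i j * p ∈ alternatingGroup α := by
  simp only [mem_alternatingGroup, map_mul, sign_swap hij]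
  rcases Int.units_eq_one_or (sign p) with h | h <;> simp [h]

theorem sumCongr_mem_galoisClosure {α β : Type*} [Fintype α] [DecidableEq α] {k : ℕ}
    (hk : k < Fintype.card α) {G : Subgroup (Perm α × Perm β)}
    (hA : (alternatingGroup α).prod ⊥ ≤ G) (g : Perm α) {h : Perm β}
    (hh : h ∈ G.map (MonoidHom.snd _ _)) :
    Equiv.sumCongr g h ∈ galoisClosure k (G.map (sumCongrHom α β)) := by
  obtain ⟨⟨g₀, h⟩, hg₀, rfl⟩ := hh
  have mem : ∀ g₁ : Perm α, g₁ * g₀⁻¹ ∈ alternatingGroup α →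
      Equiv.sumCongr g₁ h ∈ G.map (sumCongrHom α β) := fun g₁ hg₁ => by
    have h1 : (g₁ * g₀⁻¹, (1 : Perm β)) ∈ G := hA (Subgroup.mem_prod.2 ⟨hg₁, one_mem _⟩)
    exact ⟨(g₁, h), by simpa using mul_mem h1 hg₀, rfl⟩
  refine mem_galoisClosure_iff.2 fun x => ?_
  obtain ⟨i, j, hij, hx⟩ := Fintype.exists_ne_map_eq_of_card_lt (x ∘ Sum.inl) (by simpa using hk)
  rcases mem_alternatingGroup_or_swap_mul_mem hij (g * g₀⁻¹) with hg | hg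
  · exact ⟨_, mem g hg, rfl⟩
  · refine ⟨_, mem (swap i j * g) (by rwa [mul_assoc]), funext fun a => ?_⟩
    cases a with
    | inl a => exact (apply_swap_eq_self hx (g a)).symm
    | inr b => rfl

theorem stmt_9_general {α β : Type*} [Fintype α] [DecidableEq α] [Fintype β]
    (d : ℕ) (hβ : Fintype.card β < d)
    (hα : max (Fintype.card β) 4 < Fintype.card α)
    (k : ℕ) (hk : k = Fintype.card α + Fintype.card β - d) (hdk : d ≤ k)
    (L : Subgroup (Equiv.Perm β)) (G : Subgroup (Equiv.Perm α × Equiv.Perm β))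
    (hL : G.map (MonoidHom.snd (Equiv.Perm α) (Equiv.Perm β)) = L)
    (hfst : G.map (MonoidHom.fst (Equiv.Perm α) (Equiv.Perm β)) = alternatingGroup α ∨
      G.map (MonoidHom.fst (Equiv.Perm α) (Equiv.Perm β)) = ⊤) :
    galoisClosure k (G.map (Equiv.Perm.sumCongrHom α β)) =
      {σ : Equiv.Perm (α ⊕ β) | ∃ g : Equiv.Perm α, ∃ h ∈ L, σ = Equiv.sumCongr g h} := by
  have hβα : Fintype.card β < Fintype.card α := (le_max_left _ _).trans_lt hα
  have h5 : 5 ≤ Fintype.card α := (le_max_right _ _).trans_lt hα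
  have : IsSimpleGroup (alternatingGroup α) :=
    alternatingGroup.isSimpleGroup (by rwa [Nat.card_eq_fintype_card])
  have hA : (alternatingGroup α).prod ⊥ ≤ G :=
    Subgroup.prod_bot_le_of_isSimpleGroup (hfst.elim (·.ge) fun h => h ▸ le_top)
      (nat_card_perm_lt_nat_card_alternatingGroup (by omega) hβα)
  subst hL
  refine (galoisClosure_map_sumCongrHom_subset (by omega) G).antisymm ?_
  rintro _ ⟨g, h, hh, rfl⟩
  exact sumCongr_mem_galoisClosure (by omega) hA g hh

/-- The Galois closure over `k = |α| + |β| - d` of (the image in `S_{α⊕β}` of) a subdirect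
product `G ≤ S_α × S_β` with `π₁(G) ∈ {A_α, S_α}` and `π₂(G) = L` is `S_α × L`. -/
theorem stmt_9 {α β : Type*} [Fintype α] [DecidableEq α] [Fintype β]
    (d : ℕ) (hd : 1 ≤ d) (hβ : Fintype.card β < d)
    (hα : max (Fintype.card β) 4 < Fintype.card α)
    (k : ℕ) (hk : k = Fintype.card α + Fintype.card β - d) (hdk : d ≤ k) (hk2 : 2 ≤ k)
    (L : Subgroup (Equiv.Perm β)) (G : Subgroup (Equiv.Perm α × Equiv.Perm β))
    (hL : G.map (MonoidHom.snd (Equiv.Perm α) (Equiv.Perm β)) = L)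
    (hfst : G.map (MonoidHom.fst (Equiv.Perm α) (Equiv.Perm β)) = alternatingGroup α ∨
      G.map (MonoidHom.fst (Equiv.Perm α) (Equiv.Perm β)) = ⊤) :
    galoisClosure k (G.map (Equiv.Perm.sumCongrHom α β)) =
      {σ : Equiv.Perm (α ⊕ β) | ∃ g : Equiv.Perm α, ∃ h ∈ L, σ = Equiv.sumCongr g h} :=
  stmt_9_general d hβ hα k hk hdk L G hL hfst
end

section
/- Let n, k ≥ 2 and let G ≤ S_n be a subgroup that is not Galois closed over k, with Galois closure H over k. Then H is k-thick: for every tuple a : {1,…,n} → {1,…,k} there exists a permutation γ ∈ H with γ ≠ id and a∘γ = a. -/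
/-!
The Galois closure `H` of `G` is a group containing `G`, and for `k ≥ 2` it preserves every
`G`-invariant set of tuples, since the `{0, 1}`-valued indicator of such a set is a `G`-invariant
function. Applied to the `G`-orbit of a tuple `a`, this shows that every `σ ∈ H` satisfies
`a ∘ σ = a ∘ π` for some `π ∈ G`. If `G` is not closed, pick `σ ∈ H \ G`; then `σ π⁻¹ ∈ H`
fixes `a` and is not the identity.
-/

section GaloisClosure

variable {Ω : Type*} {k : ℕ} {G : Subgroup (Equiv.Perm Ω)}

theorem subset_galoisClosure : (G : Set (Equiv.Perm Ω)) ⊆ galoisClosure k G :=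
  fun _ hπ _ hf => hf _ hπ

theorem mul_mem_galoisClosure {σ τ : Equiv.Perm Ω} (hσ : σ ∈ galoisClosure k G)
    (hτ : τ ∈ galoisClosure k G) : σ * τ ∈ galoisClosure k G :=
  fun f hf x => (hσ f hf x).trans (hτ f hf (x ∘ σ))

theorem inv_mem_galoisClosure {σ : Equiv.Perm Ω} (hσ : σ ∈ galoisClosure k G) :
    σ⁻¹ ∈ galoisClosure k G := by
  intro f hf x
  have h : f (fun i => x (σ⁻¹ i)) = f (fun i => x (σ⁻¹ (σ i))) := hσ f hf _
  simpa using h.symm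

theorem comp_mem_of_mem_galoisClosure (hk : 1 < k) {S : Set (Ω → Fin k)}
    (hS : ∀ π ∈ G, ∀ x ∈ S, x ∘ ⇑π ∈ S) {σ : Equiv.Perm Ω} (hσ : σ ∈ galoisClosure k G)
    {x : Ω → Fin k} (hx : x ∈ S) : x ∘ ⇑σ ∈ S := by
  classical
  let f : (Ω → Fin k) → Fin k := fun y => if y ∈ S then ⟨1, hk⟩ else ⟨0, by omega⟩
  have hf : ∀ π ∈ G, InvariantUnder k π f := by
    intro π hπ y
    have hiff : y ∈ S ↔ y ∘ ⇑π ∈ S := by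
      refine ⟨hS π hπ y, fun hy => ?_⟩
      simpa [Function.comp_assoc] using hS π⁻¹ (G.inv_mem hπ) _ hy
    simp only [f, hiff]
    rfl
  by_contra hσx
  have h : f x = f (x ∘ ⇑σ) := hσ f hf x
  simp only [f, if_pos hx, if_neg hσx] at h
  exact absurd (congrArg Fin.val h) (by simp)

theorem exists_comp_eq_comp_of_mem_galoisClosure (hk : 1 < k) {σ : Equiv.Perm Ω}
    (hσ : σ ∈ galoisClosure k G) (a : Ω → Fin k) : ∃ π ∈ G, a ∘ ⇑σ = a ∘ ⇑π := by
  let orbit : Set (Ω → Fin k) := {x | ∃ π ∈ G, x = a ∘ ⇑π}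
  have horbit : ∀ π ∈ G, ∀ x ∈ orbit, x ∘ ⇑π ∈ orbit := by
    rintro π hπ _ ⟨ρ, hρ, rfl⟩
    exact ⟨ρ * π, G.mul_mem hρ hπ, rfl⟩
  exact comp_mem_of_mem_galoisClosure hk horbit hσ ⟨1, G.one_mem, rfl⟩

end GaloisClosure

theorem stmt_11_general (n k : ℕ) (hk : 2 ≤ k) (G : Subgroup (Equiv.Perm (Fin n)))
    (hG : ¬ IsGaloisClosed k G) :
    ∀ a : Fin n → Fin k, ∃ γ ∈ galoisClosure k G, γ ≠ 1 ∧ ∀ i, a (γ i) = a i := by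
  intro a
  obtain ⟨σ, hσ, hσG⟩ : ∃ σ ∈ galoisClosure k G, σ ∉ G := by
    by_contra! h
    exact hG (Set.Subset.antisymm h subset_galoisClosure)
  obtain ⟨π, hπ, hσπ⟩ := exists_comp_eq_comp_of_mem_galoisClosure hk hσ a
  refine ⟨σ * π⁻¹, ?_, ?_, fun i => ?_⟩
  · exact mul_mem_galoisClosure hσ (inv_mem_galoisClosure (subset_galoisClosure hπ))
  · intro h
    exact hσG (mul_inv_eq_one.mp h ▸ hπ)
  · simpa using congrFun hσπ (π⁻¹ i)

/-- If `G ≤ S_n` is not Galois closed over `k`, then its Galois closure is `k`-thick: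
every tuple `a : {1,…,n} → {1,…,k}` has a non-identity stabilizing permutation in the closure. -/
theorem stmt_11 (n k : ℕ) (hn : 2 ≤ n) (hk : 2 ≤ k) (G : Subgroup (Equiv.Perm (Fin n)))
    (hG : ¬ IsGaloisClosed k G) :
    ∀ a : Fin n → Fin k, ∃ γ ∈ galoisClosure k G, γ ≠ 1 ∧ ∀ i, a (γ i) = a i :=
  stmt_11_general n k hk G hG
end
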